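/- Let μ be the Lebesgue measure on ℝ³ restricted to a measurable transmit aperture 𝒜, H_1,…,H_K ∈ L²(μ,ℂ), A_k > 0, σ_k > 0, P_max > 0, and define SE(V) = ∑_{k=1}^K log₂(1 + A_k·|∫ H_k·V_k dμ|² / (∑_{j≠k} A_j·|∫ H_k·V_j dμ|² + σ_k²)) for V ∈ (L²(μ,ℂ))^K. Suppose V = (V_1,…,V_K) satisfies ∑_k ‖V_k‖²_{L²} = P_max, and for some index k₀ there is a decomposition V_{k₀} = W + U in L²(μ,ℂ) with ⟪U, conj(H_j)⟫_{L²} = 0 for all j, ⟪W, U⟫_{L²} = 0, and ‖U‖_{L²} > 0. If moreover there exists j with ∫ H_j·V_j dμ ≠ 0, then there exists V' = (V'_1,…,V'_K) with ∑_k ‖V'_k‖²_{L²} = P_max and SE(V') > SE(V); in particular V is not a maximizer of SE over the feasible set. -/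

import Mathlib

/-!
Write `g k j = ∫ H k * V j` for the gain of beamformer `j` at user `k`. Replacing `V k₀` by its
component `W` leaves every gain unchanged, since `U` is orthogonal to all conjugate channels, and
by Pythagoras it frees the power `‖U‖² > 0`. Spending this power by scaling all beamformers by a
common `c` with `‖c‖ > 1` multiplies every signal and interference term by `‖c‖²`, which amounts
to dividing the noise powers by `‖c‖²`. This raises every SINR, strictly for a user whose gain is
nonzero.
-/

open MeasureTheory
open scoped ComplexConjugate

section SumRate
variable {ι : Type*} [Fintype ι] [DecidableEq ι] (A σ : ι → ℝ) (g : ι → ι → ℂ)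

noncomputable def sinr (k : ι) : ℝ :=
  A k * ‖g k k‖ ^ 2 / ((∑ j ∈ Finset.univ.erase k, A j * ‖g k j‖ ^ 2) + σ k ^ 2)

noncomputable def sumRate : ℝ := ∑ k, Real.logb 2 (1 + sinr A σ g k)

variable {A σ g}

lemma sinr_nonneg (hA : ∀ j, 0 ≤ A j) (k : ι) : 0 ≤ sinr A σ g k :=
  div_nonneg (mul_nonneg (hA k) (sq_nonneg _))
    (add_nonneg (Finset.sum_nonneg fun j _ => mul_nonneg (hA j) (sq_nonneg _)) (sq_nonneg _))

lemma sinr_smul {c : ℂ} (hc : c ≠ 0) (k : ι) :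
    sinr A σ (c • g) k = sinr A (‖c‖⁻¹ • σ) g k := by
  have hc : ‖c‖ ^ 2 ≠ 0 := pow_ne_zero 2 (norm_ne_zero_iff.2 hc)
  simp only [sinr, Pi.smul_apply, smul_eq_mul, norm_mul, mul_pow, mul_left_comm (A _),
    ← Finset.mul_sum, inv_pow]
  field_simp

lemma sinr_le_sinr_of_sq_le {σ' : ι → ℝ} (hA : ∀ j, 0 ≤ A j) {k : ι} (hσ' : σ' k ≠ 0)
    (h : σ' k ^ 2 ≤ σ k ^ 2) : sinr A σ g k ≤ sinr A σ' g k :=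
  div_le_div_of_nonneg_left (mul_nonneg (hA k) (sq_nonneg _))
    (add_pos_of_nonneg_of_pos (Finset.sum_nonneg fun j _ => mul_nonneg (hA j) (sq_nonneg _))
      (sq_pos_of_ne_zero hσ')) (add_le_add_right h _)

lemma sinr_lt_sinr_of_sq_lt {σ' : ι → ℝ} (hA : ∀ j, 0 ≤ A j) {k : ι} (hAk : 0 < A k)
    (hg : g k k ≠ 0) (hσ' : σ' k ≠ 0) (h : σ' k ^ 2 < σ k ^ 2) :
    sinr A σ g k < sinr A σ' g k :=
  div_lt_div_of_pos_left (mul_pos hAk (pow_pos (norm_pos_iff.2 hg) 2))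
    (add_pos_of_nonneg_of_pos (Finset.sum_nonneg fun j _ => mul_nonneg (hA j) (sq_nonneg _))
      (sq_pos_of_ne_zero hσ')) (add_lt_add_right h _)

lemma sumRate_lt_sumRate_of_sq_lt {σ' : ι → ℝ} (hA : ∀ j, 0 < A j) (hσ' : ∀ k, σ' k ≠ 0)
    (h : ∀ k, σ' k ^ 2 < σ k ^ 2) (hg : ∃ k, g k k ≠ 0) : sumRate A σ g < sumRate A σ' g := by
  have hA₀ j : 0 ≤ A j := (hA j).le
  have hpos k : 0 < 1 + sinr A σ g k := by linarith [sinr_nonneg (σ := σ) (g := g) hA₀ k]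
  obtain ⟨k, hk⟩ := hg
  refine Finset.sum_lt_sum (fun j _ => ?_) ⟨k, Finset.mem_univ k, ?_⟩
  · exact Real.logb_le_logb_of_le one_lt_two (hpos j) <|
      add_le_add_right (sinr_le_sinr_of_sq_le hA₀ (hσ' j) (h j).le) 1
  · exact Real.logb_lt_logb one_lt_two (hpos k) <|
      add_lt_add_right (sinr_lt_sinr_of_sq_lt hA₀ (hA k) hk (hσ' k) (h k)) 1

theorem sumRate_lt_sumRate_smul (hA : ∀ j, 0 < A j) (hσ : ∀ k, σ k ≠ 0) (hg : ∃ k, g k k ≠ 0)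
    {c : ℂ} (hc : 1 < ‖c‖) : sumRate A σ g < sumRate A σ (c • g) := by
  have hc₀ : c ≠ 0 := norm_pos_iff.1 (one_pos.trans hc)
  simp only [sumRate, sinr_smul hc₀]
  refine sumRate_lt_sumRate_of_sq_lt hA
    (fun k => smul_ne_zero (inv_ne_zero (norm_ne_zero_iff.2 hc₀)) (hσ k)) (fun k => ?_) hg
  rw [Pi.smul_apply, smul_eq_mul, mul_pow]
  exact mul_lt_of_lt_one_left (sq_pos_of_ne_zero (hσ k))
    (pow_lt_one₀ (by positivity) (inv_lt_one_of_one_lt₀ hc) two_ne_zero)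

end SumRate

section L2
variable {α : Type*} [MeasurableSpace α] {μ : Measure α} {𝕜 : Type*} [RCLike 𝕜]

lemma integral_norm_add_sq_of_integral_conj_mul_eq_zero {f g : α → 𝕜} (hf : MemLp f 2 μ)
    (hg : MemLp g 2 μ) (h : ∫ r, conj (f r) * g r ∂μ = 0) :
    ∫ r, ‖f r + g r‖ ^ 2 ∂μ = ∫ r, ‖f r‖ ^ 2 ∂μ + ∫ r, ‖g r‖ ^ 2 ∂μ := by
  have hf2 := (memLp_two_iff_integrable_sq_norm hf.1).1 hf
  have hg2 := (memLp_two_iff_integrable_sq_norm hg.1).1 hg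
  have hfg : Integrable (fun r => conj (f r) * g r) μ := hf.star.integrable_mul hg
  have hre : ∫ r, RCLike.re (conj (f r) * g r) ∂μ = 0 := by rw [integral_re hfg, h, map_zero]
  have hcross : Integrable (fun r => ‖f r‖ ^ 2 + 2 * RCLike.re (conj (f r) * g r)) μ :=
    hf2.add (hfg.re.const_mul 2)
  simp_rw [norm_add_sq (𝕜 := 𝕜), RCLike.inner_apply']
  rw [integral_add hcross hg2, integral_add hf2 (hfg.re.const_mul 2), integral_const_mul, hre,
    mul_zero, add_zero]

lemma integral_mul_eq_of_ae_eq_add {h v w u : α → 𝕜} (hh : MemLp h 2 μ) (hw : MemLp w 2 μ)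
    (hu : MemLp u 2 μ) (hv : v =ᵐ[μ] fun r => w r + u r)
    (hu_perp : ∫ r, conj (u r) * conj (h r) ∂μ = 0) :
    ∫ r, h r * v r ∂μ = ∫ r, h r * w r ∂μ := by
  have hhu : ∫ r, h r * u r ∂μ = 0 := by
    rw [← (RingHom.injective conj).eq_iff, ← integral_conj, map_zero, ← hu_perp]
    exact integral_congr_ae (.of_forall fun r => by simp only [map_mul, mul_comm])
  calc ∫ r, h r * v r ∂μ = ∫ r, h r * w r + h r * u r ∂μ :=
        integral_congr_ae (hv.mono fun r hr => by simp only [hr, mul_add])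
    _ = ∫ r, h r * w r ∂μ := by
        rw [integral_add (by exact hh.integrable_mul hw) (by exact hh.integrable_mul hu), hhu,
          add_zero]

lemma integral_norm_sq_pos_of_integral_mul_ne_zero {h f : α → 𝕜} (hf : MemLp f 2 μ)
    (hne : ∫ r, h r * f r ∂μ ≠ 0) : 0 < ∫ r, ‖f r‖ ^ 2 ∂μ := by
  refine (integral_nonneg fun _ => sq_nonneg _).lt_of_ne fun h0 => hne ?_
  have hf0 := (integral_eq_zero_iff_of_nonneg (fun _ => sq_nonneg _)
    ((memLp_two_iff_integrable_sq_norm hf.1).1 hf)).1 h0.symm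
  refine integral_eq_zero_of_ae (hf0.mono fun r hr => ?_)
  have : f r = 0 := by simpa using hr
  simp [this]

lemma integral_norm_smul_sq {E : Type*} [NormedAddCommGroup E] [NormedSpace 𝕜 E] (c : 𝕜)
    (f : α → E) : ∫ r, ‖c • f r‖ ^ 2 ∂μ = ‖c‖ ^ 2 * ∫ r, ‖f r‖ ^ 2 ∂μ := by
  simp_rw [norm_smul, mul_pow]
  exact integral_const_mul _ _

lemma sum_integral_norm_sq_update {ι E : Type*} [Fintype ι] [DecidableEq ι]
    [NormedAddCommGroup E] (V : ι → α → E) (k₀ : ι) (W : α → E) :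
    ∑ k, ∫ r, ‖Function.update V k₀ W k r‖ ^ 2 ∂μ
      = ∑ k, ∫ r, ‖V k r‖ ^ 2 ∂μ - ∫ r, ‖V k₀ r‖ ^ 2 ∂μ + ∫ r, ‖W r‖ ^ 2 ∂μ := by
  simp only [Function.apply_update (fun _ (F : α → E) => ∫ r, ‖F r‖ ^ 2 ∂μ),
    Finset.sum_update_of_mem (Finset.mem_univ k₀),
    Finset.sum_eq_sum_sdiff_singleton_add (Finset.mem_univ k₀) (fun k => ∫ r, ‖V k r‖ ^ 2 ∂μ)]
  ring

end L2

lemma exists_one_lt_norm_sq_mul_eq {p q : ℝ} (hp : 0 < p) (hpq : p < q) :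
    ∃ c : ℂ, 1 < ‖c‖ ∧ ‖c‖ ^ 2 * p = q := by
  have ht : 1 < q / p := (one_lt_div hp).2 hpq
  refine ⟨(Real.sqrt (q / p) : ℂ), ?_, ?_⟩ <;>
    rw [Complex.norm_real, Real.norm_of_nonneg (Real.sqrt_nonneg _)]
  · exact Real.lt_sqrt zero_le_one |>.2 (by rwa [one_pow])
  · rw [Real.sq_sqrt (by positivity), div_mul_cancel₀ _ hp.ne']

theorem beamformer_with_orthogonal_component_not_optimal_general
    {K : ℕ}
    (μ : Measure (Fin 3 → ℝ))
    (H : Fin K → (Fin 3 → ℝ) → ℂ) (hH : ∀ k, MemLp (H k) 2 μ)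
    (A σ : Fin K → ℝ) (hA : ∀ k, 0 < A k) (hσ : ∀ k, 0 < σ k)
    (Pmax : ℝ)
    (SE P : (Fin K → (Fin 3 → ℝ) → ℂ) → ℝ)
    (hSE : ∀ V, SE V = ∑ k, Real.logb 2
      (1 + A k * ‖∫ r, H k r * V k r ∂μ‖ ^ 2 /
        ((∑ j ∈ Finset.univ.erase k, A j * ‖∫ r, H k r * V j r ∂μ‖ ^ 2) + σ k ^ 2)))
    (hP : ∀ V, P V = ∑ k, ∫ r, ‖V k r‖ ^ 2 ∂μ)
    (V : Fin K → (Fin 3 → ℝ) → ℂ) (hV : ∀ k, MemLp (V k) 2 μ)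
    (hfeas : P V = Pmax)
    (k₀ : Fin K) (W U : (Fin 3 → ℝ) → ℂ)
    (hW : MemLp W 2 μ) (hU : MemLp U 2 μ)
    (hdecomp : V k₀ =ᵐ[μ] fun r => W r + U r)
    (hUperpH : ∀ j, (∫ r, (starRingEnd ℂ) (U r) * (starRingEnd ℂ) (H j r) ∂μ) = 0)
    (hWperpU : (∫ r, (starRingEnd ℂ) (W r) * U r ∂μ) = 0)
    (hUnonzero : 0 < ∫ r, ‖U r‖ ^ 2 ∂μ)
    (hsig : ∃ j, (∫ r, H j r * V j r ∂μ) ≠ 0) :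
    ∃ V' : Fin K → (Fin 3 → ℝ) → ℂ,
      (∀ k, MemLp (V' k) 2 μ) ∧ P V' = Pmax ∧ SE V < SE V' := by
  obtain ⟨j, hj⟩ := hsig
  set V₀ := Function.update V k₀ W
  have hV₀ : ∀ k, MemLp (V₀ k) 2 μ :=
    (Function.forall_update_iff V fun _ f => MemLp f 2 μ).2 ⟨hW, fun k _ => hV k⟩
  have hgain : ∀ k i, ∫ r, H k r * V₀ i r ∂μ = ∫ r, H k r * V i r ∂μ := fun k =>
    (Function.forall_update_iff V fun i f => ∫ r, H k r * f r ∂μ = ∫ r, H k r * V i r ∂μ).2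
      ⟨(integral_mul_eq_of_ae_eq_add (hH k) hW hU hdecomp (hUperpH k)).symm, fun _ _ => rfl⟩
  have hpythag : ∫ r, ‖V k₀ r‖ ^ 2 ∂μ = ∫ r, ‖W r‖ ^ 2 ∂μ + ∫ r, ‖U r‖ ^ 2 ∂μ :=
    (integral_congr_ae (hdecomp.mono fun r hr => by simp only [hr])).trans
      (integral_norm_add_sq_of_integral_conj_mul_eq_zero hW hU hWperpU)
  have hpower : P V₀ + ∫ r, ‖U r‖ ^ 2 ∂μ = Pmax := by
    rw [← hfeas, hP, hP, sum_integral_norm_sq_update, hpythag]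
    ring
  have hpos : 0 < P V₀ := hP V₀ ▸
    (integral_norm_sq_pos_of_integral_mul_ne_zero (hV₀ j) ((hgain j j).trans_ne hj)).trans_le
      (Finset.single_le_sum (f := fun k => ∫ r, ‖V₀ k r‖ ^ 2 ∂μ)
        (fun k _ => integral_nonneg fun _ => sq_nonneg _) (Finset.mem_univ j))
  obtain ⟨c, hc, hcP⟩ := exists_one_lt_norm_sq_mul_eq (q := Pmax) hpos (by linarith)
  refine ⟨c • V₀, fun k => (hV₀ k).const_smul c, ?_, ?_⟩
  · rw [hP, ← hcP, hP, Finset.mul_sum]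
    simp only [Pi.smul_apply, integral_norm_smul_sq]
  · have hSE' : ∀ V, SE V = sumRate A σ (fun k i => ∫ r, H k r * V i r ∂μ) := hSE
    have hgain' : (fun k i => ∫ r, H k r * (c • V₀) i r ∂μ)
        = c • fun k i => ∫ r, H k r * V i r ∂μ := by
      ext k i
      simp only [Pi.smul_apply, mul_smul_comm, integral_smul, hgain]
    rw [hSE', hSE', hgain']
    exact sumRate_lt_sumRate_smul hA (fun k => (hσ k).ne') ⟨j, hj⟩ hc

/-- **Appendix A construction.** If some beamformer has a nonzero component
orthogonal to the conjugate channel subspace (and some equivalent signal gain is nonzero),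
then a strictly better feasible solution exists, so the tuple is not an SE maximizer. -/
theorem beamformer_with_orthogonal_component_not_optimal
    {K : ℕ} (hK : 1 ≤ K)
    (𝒜 : Set (Fin 3 → ℝ)) (h𝒜 : MeasurableSet 𝒜)
    (μ : Measure (Fin 3 → ℝ)) (hμ : μ = volume.restrict 𝒜)
    (H : Fin K → (Fin 3 → ℝ) → ℂ) (hH : ∀ k, MemLp (H k) 2 μ)
    (A σ : Fin K → ℝ) (hA : ∀ k, 0 < A k) (hσ : ∀ k, 0 < σ k)
    (Pmax : ℝ) (hPmax : 0 < Pmax)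
    (SE P : (Fin K → (Fin 3 → ℝ) → ℂ) → ℝ)
    (hSE : ∀ V, SE V = ∑ k, Real.logb 2
      (1 + A k * ‖∫ r, H k r * V k r ∂μ‖ ^ 2 /
        ((∑ j ∈ Finset.univ.erase k, A j * ‖∫ r, H k r * V j r ∂μ‖ ^ 2) + σ k ^ 2)))
    (hP : ∀ V, P V = ∑ k, ∫ r, ‖V k r‖ ^ 2 ∂μ)
    (V : Fin K → (Fin 3 → ℝ) → ℂ) (hV : ∀ k, MemLp (V k) 2 μ)
    (hfeas : P V = Pmax)
    (k₀ : Fin K) (W U : (Fin 3 → ℝ) → ℂ)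
    (hW : MemLp W 2 μ) (hU : MemLp U 2 μ)
    (hdecomp : V k₀ =ᵐ[μ] fun r => W r + U r)
    (hUperpH : ∀ j, (∫ r, (starRingEnd ℂ) (U r) * (starRingEnd ℂ) (H j r) ∂μ) = 0)
    (hWperpU : (∫ r, (starRingEnd ℂ) (W r) * U r ∂μ) = 0)
    (hUnonzero : 0 < ∫ r, ‖U r‖ ^ 2 ∂μ)
    (hsig : ∃ j, (∫ r, H j r * V j r ∂μ) ≠ 0) :
    ∃ V' : Fin K → (Fin 3 → ℝ) → ℂ,
      (∀ k, MemLp (V' k) 2 μ) ∧ P V' = Pmax ∧ SE V < SE V' :=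
  beamformer_with_orthogonal_component_not_optimal_general μ H hH A σ hA hσ Pmax SE P hSE hP V hV
    hfeas k₀ W U hW hU hdecomp hUperpH hWperpU hUnonzero hsig
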